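/- arXiv:2302.12633 — 4 statements merged into one kernel-verified Lean document; each statement's English description precedes it below -/
import Mathlib

section
/- Let t be an integer with t ≥ 3 and let G be a finite simple K_t-minor-free graph. Then for every nonempty set A ⊆ V(G) and every nonnegative integer r, |Π_{r,G}[V(G) → A]| ≤ (r+1)^{t−1}·|A|^{t−1}. -/
open SimpleGraph

/-- `G` contains `H` as a minor: pairwise disjoint nonempty connected branch sets,
one for each vertex of `H`, with an edge of `G` between the branch sets of any
two adjacent vertices of `H`. -/
def SimpleGraph.HasMinor {V W : Type*} (G : SimpleGraph V) (H : SimpleGraph W) : Prop :=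
  ∃ B : W → Set V,
    (∀ w, (B w).Nonempty) ∧
    (Pairwise fun w w' => Disjoint (B w) (B w')) ∧
    (∀ w, (G.induce (B w)).Connected) ∧
    (∀ ⦃w w'⦄, H.Adj w w' → ∃ u ∈ B w, ∃ v ∈ B w', G.Adj u v)

/-- A graph is planar iff it has no `K₅` minor and no `K_{3,3}` minor (Wagner). -/
def SimpleGraph.Planar {V : Type*} (G : SimpleGraph V) : Prop :=
  ¬ G.HasMinor (⊤ : SimpleGraph (Fin 5)) ∧
  ¬ G.HasMinor (completeBipartiteGraph (Fin 3) (Fin 3))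

/-- The profile of `u` on `A` at distance `r`: maps `a ∈ A` to `dist_G(u,a)` if this is
at most `r`, and to `∞` otherwise. -/
noncomputable def SimpleGraph.profile {V : Type*} (G : SimpleGraph V) (r : ℕ) (A : Set V)
    (u : V) : A → ℕ∞ :=
  fun a => if G.edist u (a : V) ≤ r then G.edist u (a : V) else ⊤

/-- `Π_{r,G}[U → A]`: the set of distance-`r` profiles on `A` of vertices of `U`,
excluding the constant-`∞` profile. -/
noncomputable def SimpleGraph.profiles {V : Type*} (G : SimpleGraph V) (r : ℕ) (U A : Set V) :
    Set (A → ℕ∞) :=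
  {f | ∃ u ∈ U, f = G.profile r A u} \ {fun _ => ⊤}

/-!
Encode the profile of a vertex `u` on `A` as the trace `{(a, i) : dist(u, a) ≤ i}` of the balls
around `u` on `A × {0, …, r}`. The constant-`∞` profile has empty trace and distinct profiles have
distinct traces, so by Sauer–Shelah it suffices to show that this set system shatters no `t`
points `(a_j, Δ_j)`: every nonempty set of at most `t - 1` points is the image of one of the
`(|A|(r+1))^(t-1)` maps `Fin (t - 1) → A × {0, …, r}`. Shattering provides a vertex in exactly the ball `B(a_j, Δ_j)` for each `j`,
and one in exactly `B(a_j, Δ_j) ∩ B(a_k, Δ_k)` for each pair. Assign every vertex to the ball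
minimising `dist(u, a_j) - Δ_j` (ties broken by `j`). Along a geodesic towards `a_j` this quantity
drops by one at each step while the others drop by at most one, so the vertices assigned to `j`
form connected sets, and a geodesic from a pair vertex to `a_k` crosses from the `j`-th set into
the `k`-th: a `K_t` minor.
-/

open Finset

namespace Finset

variable {α : Type*}

theorem exists_image_univ_eq_of_card_le [DecidableEq α] {s : Finset α} {d : ℕ} (hs : s.Nonempty)
    (hd : #s ≤ d) : ∃ f : Fin d → α, univ.image f = s := by
  obtain ⟨e⟩ := Function.Embedding.nonempty_of_card_le (α := s) (β := Fin d) (by simpa using hd)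
  have : Nonempty s := hs.to_subtype
  refine ⟨fun i => (Function.invFun e i : s), ?_⟩
  ext x
  simp only [mem_image, mem_univ, true_and]
  constructor
  · rintro ⟨i, rfl⟩
    exact (Function.invFun e i).2
  · intro hx
    obtain ⟨i, hi⟩ := Function.invFun_surjective e.injective ⟨x, hx⟩
    exact ⟨i, congrArg Subtype.val hi⟩

theorem card_le_pow_add_one_of_forall_shatters [Fintype α] [DecidableEq α]
    {𝒜 : Finset (Finset α)} {d : ℕ} (h : ∀ s, 𝒜.Shatters s → #s ≤ d) :
    #𝒜 ≤ Fintype.card α ^ d + 1 := by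
  have hsub : 𝒜.shatterer ⊆ insert ∅ ((univ : Finset (Fin d → α)).image fun f => univ.image f) := by
    intro s hs
    rcases s.eq_empty_or_nonempty with rfl | hne
    · exact mem_insert_self _ _
    obtain ⟨f, hf⟩ := exists_image_univ_eq_of_card_le hne (h s (mem_shatterer.1 hs))
    exact mem_insert_of_mem (mem_image.2 ⟨f, mem_univ _, hf⟩)
  calc #𝒜 ≤ #𝒜.shatterer := card_le_card_shatterer 𝒜
    _ ≤ #((univ : Finset (Fin d → α)).image fun f => univ.image f) + 1 :=
      (card_le_card hsub).trans (card_insert_le _ _)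
    _ ≤ Fintype.card α ^ d + 1 := by
      gcongr
      exact card_image_le.trans (by simp)

end Finset

theorem ENat.eq_of_forall_le_coe_iff {x y : ℕ∞} {r : ℕ} (hx : x ≤ r ∨ x = ⊤)
    (hy : y ≤ r ∨ y = ⊤) (h : ∀ i ≤ r, x ≤ i ↔ y ≤ i) : x = y := by
  induction x using ENat.recTopCoe <;> induction y using ENat.recTopCoe
  · rfl
  · simp only [Nat.cast_le] at h hy
    simpa using h _ (hy.resolve_right (ENat.natCast_ne_top _))
  · simp only [Nat.cast_le] at h hx
    simpa using h _ (hx.resolve_right (ENat.natCast_ne_top _))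
  · simp only [Nat.cast_le, Nat.cast_inj, ENat.natCast_ne_top, or_false] at *
    exact le_antisymm ((h _ hy).2 le_rfl) ((h _ hx).1 le_rfl)

namespace SimpleGraph

variable {V : Type*} (G : SimpleGraph V)

theorem exists_walk_forall_edist_add_eq {u v : V} (h : G.edist u v ≠ ⊤) :
    ∃ p : G.Walk u v, ∀ x ∈ p.support, G.edist u x + G.edist x v = G.edist u v := by
  classical
  obtain ⟨p, hp⟩ := G.exists_walk_of_edist_ne_top h
  refine ⟨p, fun x hx => le_antisymm ?_ G.edist_triangle⟩
  calc G.edist u x + G.edist x v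
      ≤ (p.takeUntil x hx).length + (p.dropUntil x hx).length :=
        add_le_add (G.edist_le _) (G.edist_le _)
    _ = G.edist u v := by rw [← Nat.cast_add, ← Walk.length_append, p.take_spec hx, hp]

section BallMinor

variable {t : ℕ} (a : Fin t → V) (Δ : Fin t → ℕ)

/-- `dist(u, a j) - Δ j`, shifted by the constant `∑ k, Δ k` to stay in `ℕ∞`. -/
noncomputable def ballExcess (u : V) (j : Fin t) : ℕ∞ :=
  G.edist u (a j) + ↑(∑ k ∈ univ.erase j, Δ k)

def ballBranch (j : Fin t) : Set V :=
  {u | G.edist u (a j) ≤ Δ j ∧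
    ∀ k ≠ j, toLex (G.ballExcess a Δ u j, j) < toLex (G.ballExcess a Δ u k, k)}

variable {G a Δ}

theorem edist_le_iff_ballExcess_le {u : V} {j : Fin t} :
    G.edist u (a j) ≤ Δ j ↔ G.ballExcess a Δ u j ≤ ↑(∑ k, Δ k) := by
  rw [ballExcess, ← add_sum_erase _ _ (mem_univ j), Nat.cast_add,
    ENat.add_le_add_iff_right (ENat.natCast_ne_top _)]

theorem toLex_ballExcess_lt_of_edist_le {u : V} {j k : Fin t} (hj : G.edist u (a j) ≤ Δ j)
    (hk : ¬G.edist u (a k) ≤ Δ k) :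
    toLex (G.ballExcess a Δ u j, j) < toLex (G.ballExcess a Δ u k, k) :=
  Prod.Lex.toLex_lt_toLex.2 <| .inl <| (edist_le_iff_ballExcess_le.1 hj).trans_lt <|
    not_le.1 (edist_le_iff_ballExcess_le.not.1 hk)

theorem edist_le_of_toLex_ballExcess_le {u : V} {j k : Fin t}
    (hle : toLex (G.ballExcess a Δ u j, j) ≤ toLex (G.ballExcess a Δ u k, k))
    (hk : G.edist u (a k) ≤ Δ k) : G.edist u (a j) ≤ Δ j := by
  refine edist_le_iff_ballExcess_le.2 (le_trans ?_ (edist_le_iff_ballExcess_le.1 hk))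
  rcases Prod.Lex.toLex_le_toLex.1 hle with h | ⟨h, -⟩
  exacts [h.le, h.le]

/-- Moving from `u` to a vertex `x` on a geodesic towards `a k` lowers `ballExcess · k` by exactly
`dist(u, x)` and every other `ballExcess · l` by at most that much. -/
theorem toLex_ballExcess_lt_of_edist_add_eq {u x : V} {k l : Fin t} (hux : G.edist u x ≠ ⊤)
    (hx : G.edist u x + G.edist x (a k) = G.edist u (a k))
    (h : toLex (G.ballExcess a Δ u k, k) < toLex (G.ballExcess a Δ u l, l)) :
    toLex (G.ballExcess a Δ x k, k) < toLex (G.ballExcess a Δ x l, l) := by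
  have hk : G.ballExcess a Δ u k = G.ballExcess a Δ x k + G.edist u x := by
    rw [ballExcess, ballExcess, ← hx]
    ring
  have hl : G.ballExcess a Δ u l ≤ G.ballExcess a Δ x l + G.edist u x := by
    rw [ballExcess, ballExcess, add_right_comm]
    gcongr
    rw [add_comm]
    exact G.edist_triangle
  rw [Prod.Lex.toLex_lt_toLex, hk] at h
  rw [Prod.Lex.toLex_lt_toLex]
  rcases h with h | ⟨h, hkl⟩
  · exact .inl ((ENat.add_lt_add_iff_right hux).1 (h.trans_le hl))
  · rcases ((ENat.add_le_add_iff_right hux).1 (h.le.trans hl)).lt_or_eq with h' | h'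
    exacts [.inl h', .inr ⟨h', hkl⟩]

theorem mem_ballBranch_of_edist_add_eq {u x : V} {j : Fin t} (hu : u ∈ G.ballBranch a Δ j)
    (hx : G.edist u x + G.edist x (a j) = G.edist u (a j)) : x ∈ G.ballBranch a Δ j := by
  have hfin : G.edist u (a j) ≠ ⊤ := ne_top_of_le_ne_top (ENat.natCast_ne_top _) hu.1
  refine ⟨(le_add_self.trans_eq hx).trans hu.1, fun k hk => ?_⟩
  exact toLex_ballExcess_lt_of_edist_add_eq (ne_top_of_le_ne_top hfin (le_self_add.trans_eq hx))
    hx (hu.2 k hk)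

theorem ballBranch_disjoint {j k : Fin t} (hjk : j ≠ k) :
    Disjoint (G.ballBranch a Δ j) (G.ballBranch a Δ k) :=
  Set.disjoint_left.2 fun _ hj hk => (hj.2 k hjk.symm).asymm (hk.2 j hjk)

theorem mem_ballBranch_of_forall_edist_le_iff {v : V} {j : Fin t}
    (hv : ∀ l, G.edist v (a l) ≤ Δ l ↔ l = j) : v ∈ G.ballBranch a Δ j :=
  ⟨(hv j).2 rfl, fun _ hk => toLex_ballExcess_lt_of_edist_le ((hv j).2 rfl) (hk ∘ (hv _).1)⟩

theorem center_mem_ballBranch {v : V} {j : Fin t} (hv : ∀ l, G.edist v (a l) ≤ Δ l ↔ l = j) :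
    a j ∈ G.ballBranch a Δ j :=
  mem_ballBranch_of_edist_add_eq (mem_ballBranch_of_forall_edist_le_iff hv) (by simp)

theorem ballBranch_connected {j : Fin t} (hj : a j ∈ G.ballBranch a Δ j) :
    (G.induce (G.ballBranch a Δ j)).Connected := by
  refine G.induce_connected_of_patches (a j) hj fun {u} hu => ?_
  obtain ⟨p, hp⟩ := G.exists_walk_forall_edist_add_eq
    (ne_top_of_le_ne_top (ENat.natCast_ne_top _) hu.1)
  refine ⟨{x | x ∈ p.support}, fun x hx => mem_ballBranch_of_edist_add_eq hu (hp x hx),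
    p.end_mem_support, p.start_mem_support, ?_⟩
  exact p.connected_induce_support.preconnected _ _

/-- A geodesic from `w` to `a k` stays in the two branches of `j` and `k`, so it crosses from one
to the other along an edge. -/
theorem exists_adj_ballBranch {w : V} {j k : Fin t} (hjk : j ≠ k) (hk : a k ∈ G.ballBranch a Δ k)
    (hw : ∀ l, G.edist w (a l) ≤ Δ l ↔ l = j ∨ l = k)
    (hlt : toLex (G.ballExcess a Δ w j, j) < toLex (G.ballExcess a Δ w k, k)) :
    ∃ x ∈ G.ballBranch a Δ j, ∃ y ∈ G.ballBranch a Δ k, G.Adj x y := by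
  have hwl : ∀ l, l ≠ j → l ≠ k → ¬G.edist w (a l) ≤ Δ l :=
    fun l hlj hlk h => ((hw l).1 h).elim hlj hlk
  have hwj : w ∈ G.ballBranch a Δ j := by
    refine ⟨(hw j).2 (.inl rfl), fun l hl => ?_⟩
    by_cases hlk : l = k
    · exact hlk ▸ hlt
    · exact toLex_ballExcess_lt_of_edist_le ((hw j).2 (.inl rfl)) (hwl l hl hlk)
  have hwk : G.edist w (a k) ≤ Δ k := (hw k).2 (.inr rfl)
  obtain ⟨p, hp⟩ :=
    G.exists_walk_forall_edist_add_eq (ne_top_of_le_ne_top (ENat.natCast_ne_top _) hwk)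
  have hsupp : ∀ x ∈ p.support, x ∈ G.ballBranch a Δ j ∨ x ∈ G.ballBranch a Δ k := by
    intro x hx
    have hux : G.edist w x ≠ ⊤ :=
      ne_top_of_le_ne_top (ne_top_of_le_ne_top (ENat.natCast_ne_top _) hwk)
        (le_self_add.trans_eq (hp x hx))
    have hxk : G.edist x (a k) ≤ Δ k := (le_add_self.trans_eq (hp x hx)).trans hwk
    have hmin : ∀ l, l ≠ j → l ≠ k →
        toLex (G.ballExcess a Δ x k, k) < toLex (G.ballExcess a Δ x l, l) :=
      fun l hlj hlk => toLex_ballExcess_lt_of_edist_add_eq hux (hp x hx)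
        (toLex_ballExcess_lt_of_edist_le hwk (hwl l hlj hlk))
    have hne : toLex (G.ballExcess a Δ x j, j) ≠ toLex (G.ballExcess a Δ x k, k) := by
      simp [hjk]
    rcases hne.lt_or_gt with h | h
    · refine .inl ⟨edist_le_of_toLex_ballExcess_le h.le hxk, fun l hl => ?_⟩
      by_cases hlk : l = k
      · exact hlk ▸ h
      · exact h.trans (hmin l hl hlk)
    · refine .inr ⟨hxk, fun l hl => ?_⟩
      by_cases hlj : l = j
      · exact hlj ▸ h
      · exact hmin l hlj hl
  obtain ⟨d, hd, hdj, hdk⟩ := p.exists_boundary_dart (G.ballBranch a Δ j) hwj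
    (Set.disjoint_right.1 (ballBranch_disjoint hjk) hk)
  exact ⟨d.fst, hdj, d.snd, (hsupp _ (p.dart_snd_mem_support_of_mem_darts hd)).resolve_left hdk,
    d.adj⟩

variable (a Δ) in
theorem hasMinor_top_of_balls
    (hsingle : ∀ j, ∃ v, ∀ l, G.edist v (a l) ≤ Δ l ↔ l = j)
    (hpair : ∀ j k, j ≠ k → ∃ w, ∀ l, G.edist w (a l) ≤ Δ l ↔ l = j ∨ l = k) :
    G.HasMinor (⊤ : SimpleGraph (Fin t)) := by
  have ha : ∀ j, a j ∈ G.ballBranch a Δ j := fun j =>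
    (hsingle j).elim fun _ hv => center_mem_ballBranch hv
  refine ⟨G.ballBranch a Δ, fun j => ⟨a j, ha j⟩, fun j k hjk => ballBranch_disjoint hjk,
    fun j => ballBranch_connected (ha j), fun j k hjk => ?_⟩
  obtain ⟨w, hw⟩ := hpair j k hjk
  have hne : toLex (G.ballExcess a Δ w j, j) ≠ toLex (G.ballExcess a Δ w k, k) := by
    simp [hjk.ne]
  rcases hne.lt_or_gt with h | h
  · exact exists_adj_ballBranch hjk.ne (ha k) hw h
  · obtain ⟨y, hy, x, hx, hyx⟩ :=
      exists_adj_ballBranch hjk.ne.symm (ha j) (fun l => (hw l).trans or_comm) h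
    exact ⟨x, hx, y, hy, hyx.symm⟩

end BallMinor

section Profiles

variable {G} {A : Set V} {r : ℕ}

theorem profile_le_or_eq_top (u : V) (a : A) : G.profile r A u a ≤ r ∨ G.profile r A u a = ⊤ := by
  unfold profile
  split_ifs with h
  exacts [.inl h, .inr rfl]

variable [Fintype A]

def thresholds (r : ℕ) (f : A → ℕ∞) : Finset (A × Fin (r + 1)) := {x | f x.1 ≤ (x.2 : ℕ)}

theorem thresholds_injOn :
    Set.InjOn (thresholds r) {f : A → ℕ∞ | ∀ a, f a ≤ r ∨ f a = ⊤} := by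
  intro f hf g hg hfg
  funext a
  refine ENat.eq_of_forall_le_coe_iff (hf a) (hg a) fun i hi => ?_
  simpa [thresholds] using Finset.ext_iff.1 hfg (a, ⟨i, Nat.lt_succ_of_le hi⟩)

theorem eq_top_of_thresholds_eq_empty {f : A → ℕ∞} (hf : ∀ a, f a ≤ r ∨ f a = ⊤)
    (h : thresholds r f = ∅) : f = fun _ => ⊤ := by
  funext a
  refine (hf a).resolve_left fun har => ?_
  have : (a, Fin.last r) ∈ thresholds r f := by simpa [thresholds] using har
  simp [h] at this

theorem mem_thresholds_profile {u : V} {x : A × Fin (r + 1)} :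
    x ∈ thresholds r (G.profile r A u) ↔ G.edist u x.1 ≤ (x.2 : ℕ) := by
  have hxr : ((x.2 : ℕ) : ℕ∞) ≤ r := by exact_mod_cast Nat.le_of_lt_succ x.2.isLt
  rw [thresholds, mem_filter_univ, profile]
  split_ifs with h
  · rfl
  · simpa using fun h' : G.edist u x.1 ≤ (x.2 : ℕ) => h (h'.trans hxr)

variable [Fintype V] [DecidableEq V]

variable (G A r) in
/-- Adding `∅` does not affect the shattering argument, which only uses nonempty traces, and it
accounts for the excluded constant-`∞` profile in the Sauer–Shelah count. -/
noncomputable def profileFamily : Finset (Finset (A × Fin (r + 1))) :=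
  insert ∅ (univ.image fun u => thresholds r (G.profile r A u))

theorem ncard_profiles_le : (G.profiles r Set.univ A).ncard ≤ #(G.profileFamily A r) - 1 := by
  have hprofile : G.profiles r Set.univ A ⊆ {f : A → ℕ∞ | ∀ a, f a ≤ r ∨ f a = ⊤} := by
    rintro _ ⟨⟨u, -, rfl⟩, -⟩
    exact G.profile_le_or_eq_top u
  calc (G.profiles r Set.univ A).ncard
      ≤ ((G.profileFamily A r).erase ∅ : Set (Finset (A × Fin (r + 1)))).ncard := by
        refine Set.ncard_le_ncard_of_injOn (thresholds r) ?_ (thresholds_injOn.mono hprofile)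
          (Finset.finite_toSet _)
        rintro _ ⟨⟨u, -, rfl⟩, hne⟩
        refine mem_erase.2 ⟨fun h => hne ?_, mem_insert_of_mem (mem_image_of_mem _ (mem_univ u))⟩
        exact eq_top_of_thresholds_eq_empty (G.profile_le_or_eq_top u) h
    _ = #(G.profileFamily A r) - 1 := by
      rw [Set.ncard_coe_finset, profileFamily, card_erase_of_mem (mem_insert_self _ _)]

theorem card_lt_of_shatters_profileFamily {t : ℕ} (hG : ¬G.HasMinor (⊤ : SimpleGraph (Fin t)))
    {s : Finset (A × Fin (r + 1))} (hs : (G.profileFamily A r).Shatters s) : #s < t := by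
  by_contra! hts
  let e : Fin t ↪ A × Fin (r + 1) :=
    (Fin.castLEEmb hts).trans (s.equivFin.symm.toEmbedding.trans (Function.Embedding.subtype _))
  have he : ∀ j, e j ∈ s := fun j => (s.equivFin.symm _).2
  have htrace : ∀ J : Finset (Fin t), J.Nonempty →
      ∃ v, ∀ l, G.edist v (e l).1 ≤ ((e l).2 : ℕ) ↔ l ∈ J := by
    intro J hJ
    obtain ⟨B, hB, hsB⟩ := hs (show J.map e ⊆ s from fun x hx => by
      obtain ⟨j, -, rfl⟩ := mem_map.1 hx
      exact he j)
    obtain ⟨v, rfl⟩ : ∃ v, B = thresholds r (G.profile r A v) := by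
      rcases mem_insert.1 hB with rfl | hB
      · simp [hJ.ne_empty] at hsB
      · obtain ⟨v, -, rfl⟩ := mem_image.1 hB
        exact ⟨v, rfl⟩
    refine ⟨v, fun l => ?_⟩
    rw [← mem_thresholds_profile, ← mem_map' e, ← hsB, mem_inter, and_iff_right (he l)]
  exact hG (G.hasMinor_top_of_balls (fun l => (e l).1) (fun l => (e l).2)
    (fun j => by simpa using htrace {j} (singleton_nonempty j))
    (fun j k _ => by simpa using htrace {j, k} (insert_nonempty _ _)))

end Profiles

end SimpleGraph

theorem profiles_Kt_minor_free_poly_in_A_general (t : ℕ)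
    (V : Type) [Fintype V] (G : SimpleGraph V)
    (hG : ¬ G.HasMinor (⊤ : SimpleGraph (Fin t))) (A : Set V) (r : ℕ) :
    (G.profiles r Set.univ A).ncard ≤ (r + 1) ^ (t - 1) * A.ncard ^ (t - 1) := by
  classical
  have hshatters : ∀ s, (G.profileFamily A r).Shatters s → #s ≤ t - 1 := fun _ hs =>
    Nat.le_sub_one_of_lt (card_lt_of_shatters_profileFamily hG hs)
  have hcard : Fintype.card (A × Fin (r + 1)) = A.ncard * (r + 1) := by
    rw [Fintype.card_prod, Fintype.card_fin, ← Nat.card_eq_fintype_card, Nat.card_coe_set_eq]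
  calc (G.profiles r Set.univ A).ncard ≤ #(G.profileFamily A r) - 1 := ncard_profiles_le
    _ ≤ Fintype.card (A × Fin (r + 1)) ^ (t - 1) :=
      Nat.sub_le_of_le_add (card_le_pow_add_one_of_forall_shatters hshatters)
    _ = (r + 1) ^ (t - 1) * A.ncard ^ (t - 1) := by rw [hcard, mul_pow, mul_comm]

/-- If `t ≥ 3` and `G` is a finite simple `K_t`-minor-free graph, then for every nonempty
`A ⊆ V(G)` and every `r : ℕ`, `|Π_{r,G}[V(G) → A]| ≤ (r+1)^{t-1}·|A|^{t-1}`. -/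
theorem profiles_Kt_minor_free_poly_in_A (t : ℕ) (ht : 3 ≤ t)
    (V : Type) [Fintype V] (G : SimpleGraph V)
    (hG : ¬ G.HasMinor (⊤ : SimpleGraph (Fin t))) (A : Set V) (hA : A.Nonempty) (r : ℕ) :
    (G.profiles r Set.univ A).ncard ≤ (r + 1) ^ (t - 1) * A.ncard ^ (t - 1) :=
  profiles_Kt_minor_free_poly_in_A_general t V G hG A r
end

section
/- Let C be a class of finite simple graphs such that (1) whenever G ∈ C, every graph obtained from G by adding one new vertex adjacent to exactly one vertex of G is also in C, and (2) there is a function f : ℕ×ℕ → ℕ such that for every integer r ≥ 0, every G ∈ C and every A ⊆ V(G), |{N^r_G[v] ∩ A : v ∈ V(G)}| ≤ f(r,|A|). Then for every G ∈ C, every A ⊆ V(G) and every integer r ≥ 0, |Π_{r,G}[V(G) → A]| ≤ f(r,(r+1)·|A|). -/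
/-!
Attach to every vertex `a` of `G` a pendant path `a = c(a,0), c(a,1), …, c(a,r)`. The resulting
graph `H` is still in `C`, contains `G` isometrically, and `dist_H(u, c(a,i)) = dist_G(u,a) + i`.
On the `(r+1)|A|` vertices `A' = {c(a,i) : a ∈ A, i ≤ r}` the trace of the `r`-ball around `u`
records exactly the pairs with `dist_G(u,a) + i ≤ r`, and this determines the profile of `u`
on `A` (`dist_G(u,a) = r - max i` when the set of such `i` is nonempty, `∞` otherwise). So
distinct profiles give distinct ball traces of `H` on `A'`, of which there are at most
`f(r, (r+1)|A|)`.
-/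

open SimpleGraph

/-- The ball of radius `r` around `v`: all vertices at (reachable) distance at most `r`. -/
def SimpleGraph.rBall {V : Type*} (G : SimpleGraph V) (v : V) (r : ℕ) : Set V :=
  {u | G.edist v u ≤ r}

/-- The graph obtained from `G` by adding one new vertex (`none`) adjacent to exactly the
vertex `v` of `G`. -/
def SimpleGraph.addPendant {V : Type} (G : SimpleGraph V) (v : V) : SimpleGraph (Option V) :=
  SimpleGraph.fromRel (fun x y =>
    (∃ a b, x = some a ∧ y = some b ∧ G.Adj a b) ∨ (x = none ∧ y = some v))

theorem ENat.le_of_forall_add_le_imp {x y : ℕ∞} {r : ℕ} (hx : x ≤ r)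
    (h : ∀ i ≤ r, x + i ≤ r → y + i ≤ r) : y ≤ x := by
  lift x to ℕ using ne_top_of_le_ne_top (ENat.natCast_ne_top r) hx
  norm_cast at hx
  have hy := h (r - x) (Nat.sub_le r x) (by norm_cast; omega)
  lift y to ℕ using ne_top_of_le_ne_top (ENat.natCast_ne_top r) (le_self_add.trans hy)
  norm_cast at hy ⊢
  omega

theorem Set.ncard_range_le_ncard_range {α β γ : Type*} {g : α → β} {h : α → γ}
    (hh : (Set.range h).Finite) (hgh : ∀ x y, h x = h y → g x = g y) :
    (Set.range g).ncard ≤ (Set.range h).ncard := by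
  cases isEmpty_or_nonempty α
  · simp [Set.range_eq_empty]
  have hg : g = (g ∘ Function.invFun h) ∘ h :=
    funext fun x => hgh _ _ (Function.invFun_eq ⟨x, rfl⟩).symm
  rw [hg, Set.range_comp]
  exact Set.ncard_image_le hh

namespace SimpleGraph

theorem le_add_edist_of_forall_adj {V : Type*} {G : SimpleGraph V} (φ : V → ℕ∞)
    (hφ : ∀ a b, G.Adj a b → φ b ≤ φ a + 1) (x y : V) : φ y ≤ φ x + G.edist x y := by
  rcases eq_or_ne (G.edist x y) ⊤ with h | h
  · simp [h]
  obtain ⟨p, hp⟩ := exists_walk_of_edist_ne_top h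
  rw [← hp]
  clear hp h
  induction p with
  | nil => simp
  | @cons a b c hab p ih =>
    calc φ c ≤ φ b + p.length := ih
      _ ≤ φ a + 1 + p.length := by gcongr; exact hφ a b hab
      _ = φ a + (p.cons hab).length := by rw [Walk.length_cons]; push_cast; ring

section addPendant

variable {V : Type} (G : SimpleGraph V) (v : V)

@[simp]
theorem addPendant_adj_some_some {a b : V} :
    (G.addPendant v).Adj (some a) (some b) ↔ G.Adj a b := by
  simp only [addPendant, fromRel_adj, ne_eq, Option.some.injEq]
  refine ⟨fun ⟨_, h⟩ => ?_, fun h => ⟨h.ne, by aesop⟩⟩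
  obtain h | h : G.Adj a b ∨ G.Adj b a := by aesop
  exacts [h, h.symm]

@[simp]
theorem addPendant_adj_none_some {b : V} : (G.addPendant v).Adj none (some b) ↔ b = v := by
  simp [addPendant]

@[simp]
theorem addPendant_adj_some_none {b : V} : (G.addPendant v).Adj (some b) none ↔ b = v := by
  rw [adj_comm, addPendant_adj_none_some]

def toAddPendant : G →g G.addPendant v where
  toFun := some
  map_rel' := (G.addPendant_adj_some_some v).mpr

theorem addPendant_edist_some_some_le (x y : V) :
    (G.addPendant v).edist (some x) (some y) ≤ G.edist x y := by
  rcases eq_or_ne (G.edist x y) ⊤ with h | h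
  · simp [h]
  obtain ⟨p, hp⟩ := exists_walk_of_edist_ne_top h
  rw [← hp, ← Walk.length_map (G.toAddPendant v)]
  exact edist_le _

-- The retraction `none ↦ v`, shifted by one on the new vertex, is `1`-Lipschitz along edges.
theorem le_addPendant_edist (x : V) (w : Option V) :
    w.elim (G.edist x v + 1) (G.edist x) ≤ (G.addPendant v).edist (some x) w := by
  have hφ : ∀ a b, (G.addPendant v).Adj a b →
      b.elim (G.edist x v + 1) (G.edist x) ≤ a.elim (G.edist x v + 1) (G.edist x) + 1 := by
    rintro (_ | a) (_ | b) hab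
    · exact le_self_add
    · obtain rfl := (G.addPendant_adj_none_some v).mp hab
      exact le_self_add.trans le_self_add
    · obtain rfl := (G.addPendant_adj_some_none v).mp hab
      exact le_rfl
    · simpa [edist_eq_one_iff_adj.mpr ((G.addPendant_adj_some_some v).mp hab)] using
        G.edist_triangle (u := x) (v := a) (w := b)
  simpa using le_add_edist_of_forall_adj _ hφ (some x) w

@[simp]
theorem addPendant_edist_some_some (x y : V) :
    (G.addPendant v).edist (some x) (some y) = G.edist x y :=
  (G.addPendant_edist_some_some_le v x y).antisymm (G.le_addPendant_edist v x (some y))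

@[simp]
theorem addPendant_edist_some_none (x : V) :
    (G.addPendant v).edist (some x) none = G.edist x v + 1 := by
  refine le_antisymm ?_ (G.le_addPendant_edist v x none)
  calc (G.addPendant v).edist (some x) none
      ≤ (G.addPendant v).edist (some x) (some v) + (G.addPendant v).edist (some v) none :=
        SimpleGraph.edist_triangle
    _ = G.edist x v + 1 := by
        rw [addPendant_edist_some_some,
          edist_eq_one_iff_adj.mpr ((G.addPendant_adj_some_none v).mpr rfl)]

end addPendant

section traces

variable {V W : Type*} {G : SimpleGraph V} {H : SimpleGraph W} {ι : V → W} {c : V → ℕ → W}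
  {A : Set V} {r : ℕ}

theorem injOn_uncurry_of_edist_eq_add
    (hc : ∀ a ∈ A, ∀ i ≤ r, ∀ u, H.edist (ι u) (c a i) = G.edist u a + i) :
    Set.InjOn (Function.uncurry c) (A ×ˢ Set.Iic r) := by
  rintro ⟨a, i⟩ ⟨ha, hi⟩ ⟨b, j⟩ ⟨hb, hj⟩ (hcab : c a i = c b j)
  -- Evaluate the distance formula at `u = a` and at `u = b`.
  have hi_eq : (i : ℕ∞) = G.edist a b + j := by
    simpa [hcab, hc b hb j hj a] using (hc a ha i hi a).symm
  have hj_eq : (j : ℕ∞) = G.edist a b + i := by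
    simpa [← hcab, hc a ha i hi b, edist_comm] using (hc b hb j hj b).symm
  have hd : G.edist a b ≠ ⊤ := by
    rintro hd
    simp [hd] at hi_eq
  lift G.edist a b to ℕ using hd with d hd_eq
  norm_cast at hi_eq hj_eq
  have hab : G.edist a b = 0 := by rw [← hd_eq]; norm_cast; omega
  rw [edist_eq_zero_iff.mp hab, show i = j by omega]

theorem profile_apply_eq_of_forall_add_le_iff {u u' : V} {a : A}
    (h : ∀ i ≤ r, G.edist u a + i ≤ r ↔ G.edist u' a + i ≤ r) :
    G.profile r A u a = G.profile r A u' a := by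
  have hr : G.edist u a ≤ r ↔ G.edist u' a ≤ r := by simpa using h 0 (Nat.zero_le r)
  by_cases hu : G.edist u a ≤ r
  · simp only [profile, if_pos hu, if_pos (hr.mp hu)]
    exact le_antisymm (ENat.le_of_forall_add_le_imp (hr.mp hu) fun i hi => (h i hi).mpr)
      (ENat.le_of_forall_add_le_imp hu fun i hi => (h i hi).mp)
  · simp only [profile, if_neg hu, if_neg (mt hr.mpr hu)]

theorem ncard_profiles_le_ncard_rBall_inter [Finite V] [Finite W]
    (hc : ∀ a ∈ A, ∀ i ≤ r, ∀ u, H.edist (ι u) (c a i) = G.edist u a + i) :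
    (G.profiles r Set.univ A).ncard ≤
      {S | ∃ w, S = H.rBall w r ∩ Function.uncurry c '' (A ×ˢ Set.Iic r)}.ncard := by
  set A' := Function.uncurry c '' (A ×ˢ Set.Iic r)
  have htrace : ∀ u u', H.rBall (ι u) r ∩ A' = H.rBall (ι u') r ∩ A' →
      G.profile r A u = G.profile r A u' := by
    intro u u' htr
    funext a
    refine profile_apply_eq_of_forall_add_le_iff fun i hi => ?_
    have hA' : c a i ∈ A' := ⟨(a, i), ⟨a.2, hi⟩, rfl⟩
    have hmem : ∀ v, c a i ∈ H.rBall (ι v) r ∩ A' ↔ G.edist v a + i ≤ r := fun v => by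
      rw [Set.mem_inter_iff, and_iff_left hA', ← hc a a.2 i hi v]
      rfl
    rw [← hmem, ← hmem, htr]
  calc (G.profiles r Set.univ A).ncard ≤ (Set.range (G.profile r A)).ncard := by
        refine Set.ncard_le_ncard ?_ (Set.finite_range _)
        rintro _ ⟨⟨u, -, rfl⟩, -⟩
        exact ⟨u, rfl⟩
    _ ≤ (Set.range fun u => H.rBall (ι u) r ∩ A').ncard :=
        Set.ncard_range_le_ncard_range (Set.finite_range _) htrace
    _ ≤ _ := Set.ncard_le_ncard
        (Set.range_subset_iff.mpr fun u => Set.mem_ofPred.mpr ⟨ι u, rfl⟩) (Set.toFinite _)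

end traces

end SimpleGraph

def ClosedUnderAddPendant (C : ∀ (V : Type) [Fintype V], SimpleGraph V → Prop) : Prop :=
  ∀ (V : Type) [Fintype V] (G : SimpleGraph V), C V G → ∀ v : V, C (Option V) (G.addPendant v)

namespace ClosedUnderAddPendant

variable {C : ∀ (V : Type) [Fintype V], SimpleGraph V → Prop} {V : Type} [Fintype V]
  {G : SimpleGraph V}

theorem exists_pendant_path (hC : ClosedUnderAddPendant C) (hG : C V G) (x : V) (n : ℕ) :
    ∃ (W : Type) (_ : Fintype W) (H : SimpleGraph W) (ι : V → W) (y : ℕ → W), C W H ∧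
      (∀ u w, H.edist (ι u) (ι w) = G.edist u w) ∧
      ∀ i ≤ n, ∀ u, H.edist (ι u) (y i) = G.edist u x + i := by
  induction n with
  | zero => exact ⟨V, inferInstance, G, id, fun _ => x, hG, fun _ _ => rfl, by simp⟩
  | succ n ih =>
    obtain ⟨W, _, H, ι, y, hH, hι, hy⟩ := ih
    classical
    refine ⟨Option W, inferInstance, H.addPendant (y n), some ∘ ι,
      fun i => if i = n + 1 then none else some (y i), hC W H hH (y n), by simpa using hι, ?_⟩
    intro i hi u
    rcases Nat.le_succ_iff.mp hi with hi | rfl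
    · simp [show i ≠ n + 1 by omega, hy i hi u]
    · simp [hy n le_rfl u, add_assoc]

theorem exists_pendant_paths (hC : ClosedUnderAddPendant C) (hG : C V G) (s : Finset V)
    (r : ℕ) :
    ∃ (W : Type) (_ : Fintype W) (H : SimpleGraph W) (ι : V → W) (c : V → ℕ → W),
      C W H ∧
      (∀ u w, H.edist (ι u) (ι w) = G.edist u w) ∧
      ∀ a ∈ s, ∀ i ≤ r, ∀ u, H.edist (ι u) (c a i) = G.edist u a + i := by
  classical
  induction s using Finset.induction_on with
  | empty => exact ⟨V, inferInstance, G, id, fun a _ => a, hG, fun _ _ => rfl, by simp⟩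
  | insert a s _ ih =>
    obtain ⟨W, _, H, ι, c, hH, hι, hc⟩ := ih
    obtain ⟨W', _, H', κ, y, hH', hκ, hy⟩ := hC.exists_pendant_path hH (ι a) r
    refine ⟨W', inferInstance, H', κ ∘ ι, fun b i => if b = a then y i else κ (c b i), hH',
      by simp [hκ, hι], ?_⟩
    intro b hb i hi u
    rcases eq_or_ne b a with rfl | hba
    · simp [hy i hi, hι]
    · simp [hba, hκ, hc b (Finset.mem_of_mem_insert_of_ne hb hba) i hi]

end ClosedUnderAddPendant

/-- If a class `C` of finite graphs is closed under adding a pendant vertex, and the number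
of distinct ball traces on any `A` is at most `f(r,|A|)` for graphs in `C`, then
`|Π_{r,G}[V(G) → A]| ≤ f(r,(r+1)·|A|)` for every `G ∈ C`. -/
theorem profiles_of_ball_traces
    (C : ∀ (V : Type) [Fintype V], SimpleGraph V → Prop)
    (hclosed : ∀ (V : Type) [Fintype V] (G : SimpleGraph V),
      C V G → ∀ v : V, C (Option V) (G.addPendant v))
    (f : ℕ → ℕ → ℕ)
    (hf : ∀ (r : ℕ) (V : Type) [Fintype V] (G : SimpleGraph V), C V G → ∀ A : Set V,
      {S : Set V | ∃ v : V, S = G.rBall v r ∩ A}.ncard ≤ f r A.ncard)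
    (V : Type) [Fintype V] (G : SimpleGraph V) (hG : C V G) (A : Set V) (r : ℕ) :
    (G.profiles r Set.univ A).ncard ≤ f r ((r + 1) * A.ncard) := by
  obtain ⟨W, _, H, ι, c, hH, -, hc⟩ :=
    ClosedUnderAddPendant.exists_pendant_paths hclosed hG Finset.univ r
  have hcA : ∀ a ∈ A, ∀ i ≤ r, ∀ u, H.edist (ι u) (c a i) = G.edist u a + i :=
    fun a _ => hc a (Finset.mem_univ a)
  calc (G.profiles r Set.univ A).ncard
      ≤ {S | ∃ w, S = H.rBall w r ∩ Function.uncurry c '' (A ×ˢ Set.Iic r)}.ncard :=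
        ncard_profiles_le_ncard_rBall_inter hcA
    _ ≤ f r (Function.uncurry c '' (A ×ˢ Set.Iic r)).ncard := hf r W H hH _
    _ = f r ((r + 1) * A.ncard) := by
        rw [(injOn_uncurry_of_edist_eq_add hcA).ncard_image, Set.ncard_prod, Set.ncard_Iic_nat,
          mul_comm]
end

section
/- Let G be a finite simple graph, A ⊆ V(G), r,p ≥ 0 integers, and let S be an (r,p)-guarding set for A in G. Suppose that for some function f : ℕ×ℕ → ℕ that is non-decreasing in its second argument, |Π_{r,G}[V(G) → A']| ≤ f(r,|A'|) for every A' ⊆ V(G). Then |Π_{r,G}[V(G) → A]| ≤ f(r,p)·|S|. -/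
open SimpleGraph

/-- An `(r,p)`-guarding set for `A` in `G`: a family of vertex sets, each of size at most `p`,
such that for every vertex `v` (having at least one `(v,A)`-path of length at most `r`)
some member of the family intersects every `(v,A)`-path of length at most `r`. -/
def SimpleGraph.IsGuardingSet {V : Type*} (G : SimpleGraph V) (A : Set V) (r p : ℕ)
    (F : Set (Set V)) : Prop :=
  (∀ S ∈ F, S.ncard ≤ p) ∧
  ∀ v : V, (∃ a ∈ A, ∃ w : G.Walk v a, w.IsPath ∧ w.length ≤ r) →
    ∃ S ∈ F, ∀ a ∈ A, ∀ w : G.Walk v a, w.IsPath → w.length ≤ r →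
      ∃ x ∈ S, x ∈ w.support

/-!
If `S` meets every `(u, A)`-path of length at most `r`, then a shortest `u`–`a` path of length
at most `r` passes through some `x ∈ S`, so `dist(u, a) = min_{x ∈ S} (dist(u, x) + dist(x, a))`
whenever either side is at most `r`. Hence the profile of `u` on `A` is a function of its profile
on `S`. Every vertex with a non-trivial profile on `A` is guarded by some `S ∈ F`, so the
non-trivial profiles on `A` are images of the at most `f(r, |S|) ≤ f(r, p)` non-trivial profiles
on the members `S` of `F`.
-/

lemma Set.Finite.ncard_biUnion_le_mul {ι α : Type*} {t : Set ι} (ht : t.Finite) (s : ι → Set α)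
    {k : ℕ} (hk : ∀ i ∈ t, (s i).ncard ≤ k) : (⋃ i ∈ t, s i).ncard ≤ k * t.ncard :=
  calc (⋃ i ∈ t, s i).ncard = (⋃ i ∈ ht.toFinset, s i).ncard := by simp
    _ ≤ ∑ i ∈ ht.toFinset, (s i).ncard := ht.toFinset.set_ncard_biUnion_le s
    _ ≤ ht.toFinset.card • k := Finset.sum_le_card_nsmul _ _ _ (by simpa using hk)
    _ = k * t.ncard := by rw [Set.ncard_eq_toFinset_card t ht, smul_eq_mul, mul_comm]

namespace SimpleGraph

variable {V : Type*} {G : SimpleGraph V}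

lemma Walk.edist_add_edist_le_length {u v x : V} (w : G.Walk u v) (hx : x ∈ w.support) :
    G.edist u x + G.edist x v ≤ w.length := by
  classical
  have hlen := congrArg Walk.length (w.take_spec hx)
  rw [Walk.length_append] at hlen
  rw [← hlen, Nat.cast_add]
  exact add_le_add (edist_le _) (edist_le _)

lemma exists_isPath_length_eq_edist {u v : V} (h : G.edist u v ≠ ⊤) :
    ∃ w : G.Walk u v, w.IsPath ∧ (w.length : ℕ∞) = G.edist u v := by
  classical
  obtain ⟨w, hw⟩ := exists_walk_of_edist_ne_top h
  refine ⟨w.bypass, w.bypass_isPath, le_antisymm ?_ (edist_le _)⟩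
  exact hw ▸ mod_cast w.length_bypass_le_length

variable (G) in
def Guards (A : Set V) (r : ℕ) (S : Set V) (u : V) : Prop :=
  ∀ a ∈ A, ∀ w : G.Walk u a, w.IsPath → w.length ≤ r → ∃ x ∈ S, x ∈ w.support

lemma Guards.exists_edist_add_edist_le {A S : Set V} {r : ℕ} {u a : V} (hS : G.Guards A r S u)
    (ha : a ∈ A) (hd : G.edist u a ≤ r) : ∃ x ∈ S, G.edist u x + G.edist x a ≤ G.edist u a := by
  obtain ⟨w, hw, hlen⟩ := exists_isPath_length_eq_edist (ne_top_of_le_ne_top (by simp) hd)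
  obtain ⟨x, hxS, hx⟩ := hS a ha w hw (mod_cast hlen.trans_le hd)
  exact ⟨x, hxS, hlen ▸ w.edist_add_edist_le_length hx⟩

variable (G)

lemma edist_le_profile (r : ℕ) (S : Set V) (u : V) (x : S) : G.edist u x ≤ G.profile r S u x := by
  unfold profile
  split_ifs <;> simp

noncomputable def extendProfile (r : ℕ) (S A : Set V) (h : S → ℕ∞) : A → ℕ∞ :=
  fun a => if ⨅ x : S, h x + G.edist x a ≤ r then ⨅ x : S, h x + G.edist x a else ⊤

lemma extendProfile_top (r : ℕ) (S A : Set V) :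
    G.extendProfile r S A (fun _ => ⊤) = fun _ => ⊤ := by
  funext a
  simp [extendProfile]

variable {G}

lemma Guards.extendProfile_profile {A S : Set V} {r : ℕ} {u : V} (hS : G.Guards A r S u) :
    G.extendProfile r S A (G.profile r S u) = G.profile r A u := by
  funext a
  have hlow : G.edist u a ≤ ⨅ x : S, G.profile r S u x + G.edist x a :=
    le_iInf fun x => G.edist_triangle.trans (add_le_add (G.edist_le_profile r S u x) le_rfl)
  by_cases hd : G.edist u a ≤ r
  · obtain ⟨x, hxS, hx⟩ := hS.exists_edist_add_edist_le a.2 hd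
    have hinf : ⨅ x : S, G.profile r S u x + G.edist x a = G.edist u a := by
      refine le_antisymm (iInf_le_of_le ⟨x, hxS⟩ ?_) hlow
      rwa [profile, if_pos (le_self_add.trans (hx.trans hd))]
    exact (if_pos (hinf ▸ hd)).trans (hinf.trans (if_pos hd).symm)
  · have hinf : ¬ ⨅ x : S, G.profile r S u x + G.edist x a ≤ r := fun h => hd (hlow.trans h)
    exact (if_neg hinf).trans (if_neg hd).symm

lemma exists_edist_le_of_profile_ne_top {r : ℕ} {A : Set V} {u : V}
    (h : G.profile r A u ≠ fun _ => ⊤) : ∃ a : A, G.edist u a ≤ r := by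
  by_contra! hfar
  exact h (funext fun a => if_neg (hfar a).not_ge)

lemma profiles_subset_biUnion_image {A : Set V} {r : ℕ} {F : Set (Set V)}
    (hF : ∀ v : V, (∃ a ∈ A, ∃ w : G.Walk v a, w.IsPath ∧ w.length ≤ r) →
      ∃ S ∈ F, G.Guards A r S v) (U : Set V) :
    G.profiles r U A ⊆ ⋃ S ∈ F, G.extendProfile r S A '' G.profiles r U S := by
  rintro _ ⟨⟨u, hu, rfl⟩, hne⟩
  obtain ⟨a, hd⟩ := exists_edist_le_of_profile_ne_top hne
  obtain ⟨w, hw, hlen⟩ := exists_isPath_length_eq_edist (ne_top_of_le_ne_top (by simp) hd)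
  obtain ⟨S, hSF, hS⟩ := hF u ⟨a, a.2, w, hw, mod_cast hlen.trans_le hd⟩
  refine Set.mem_biUnion hSF
    ⟨G.profile r S u, ⟨⟨u, hu, rfl⟩, fun htop => hne ?_⟩, hS.extendProfile_profile⟩
  rw [← hS.extendProfile_profile, Set.mem_singleton_iff.mp htop, extendProfile_top]
  rfl

variable (G) in
lemma profiles_finite [Finite V] (r : ℕ) (U A : Set V) : (G.profiles r U A).Finite :=
  (Set.finite_range (G.profile r A)).subset fun _ ⟨⟨u, _, hu⟩, _⟩ => ⟨u, hu.symm⟩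

end SimpleGraph

/-- If `F` is an `(r,p)`-guarding set for `A` in `G` and `f` (non-decreasing in its second
argument) bounds `|Π_{r,G}[V(G) → A']| ≤ f(r,|A'|)` for all `A'`, then
`|Π_{r,G}[V(G) → A]| ≤ f(r,p)·|F|`. -/
theorem guarding_set_implies_profile_bound
    {V : Type} [Fintype V] (G : SimpleGraph V) (A : Set V) (r p : ℕ)
    (F : Set (Set V)) (hguard : G.IsGuardingSet A r p F)
    (f : ℕ → ℕ → ℕ) (hmono : ∀ s : ℕ, Monotone (f s))
    (hf : ∀ A' : Set V, (G.profiles r Set.univ A').ncard ≤ f r A'.ncard) :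
    (G.profiles r Set.univ A).ncard ≤ f r p * F.ncard := by
  obtain ⟨hsmall, hcover⟩ := hguard
  calc (G.profiles r Set.univ A).ncard
      ≤ (⋃ S ∈ F, G.extendProfile r S A '' G.profiles r Set.univ S).ncard :=
        Set.ncard_le_ncard (profiles_subset_biUnion_image hcover Set.univ) <|
          F.toFinite.biUnion fun S _ => (G.profiles_finite r _ S).image _
    _ ≤ f r p * F.ncard := F.toFinite.ncard_biUnion_le_mul _ fun S hS =>
      calc (G.extendProfile r S A '' G.profiles r Set.univ S).ncard
          ≤ (G.profiles r Set.univ S).ncard := Set.ncard_image_le (G.profiles_finite r _ S)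
        _ ≤ f r S.ncard := hf S
        _ ≤ f r p := hmono r (hsmall S hS)
end

section
/- Let G be a finite simple graph, < a linear order on V(G), A ⊆ V(G), and r a nonnegative integer. Let B = ∪_{a∈A} WReach_r[G,<,a]. Then for every vertex u ∈ V(G) at distance at most r from some vertex of A, the set B ∩ WReach_r[G,<,u] is nonempty, and taking b to be its <-maximum element, the set WReach_{2r}[G,<,b] intersects every (u,A)-path of length at most r in G. -/
open SimpleGraph

/-- `WReach G r u`: the set of vertices `v` that are `r`-weakly reachable from `u`, i.e.
there is a `(u,v)`-path of length at most `r` whose `≤`-minimum vertex is `v`. -/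
def SimpleGraph.wreach {V : Type} [LinearOrder V] (G : SimpleGraph V) (r : ℕ) (u : V) :
    Set V :=
  {v | ∃ w : G.Walk u v, w.IsPath ∧ w.length ≤ r ∧ ∀ x ∈ w.support, v ≤ x}

section Aux

variable {V : Type} [LinearOrder V] {G : SimpleGraph V}

/-- The minimum vertex of a path is weakly reachable from its start. -/
lemma mem_wreach_of_walk {u v : V} (w : G.Walk u v) (hw : w.IsPath) {r : ℕ}
    (hlen : w.length ≤ r) {m : V} (hm : m ∈ w.support)
    (hmin : ∀ x ∈ w.support, m ≤ x) : m ∈ G.wreach r u :=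
  ⟨w.takeUntil m hm, hw.takeUntil hm, le_trans (w.length_takeUntil_le hm) hlen,
    fun x hx => hmin x (w.support_takeUntil_subset hm hx)⟩

/-- Every walk has a minimum support vertex. -/
lemma exists_min_support {u v : V} (w : G.Walk u v) :
    ∃ m ∈ w.support, ∀ x ∈ w.support, m ≤ x := by
  classical
  have hne : w.support.toFinset.Nonempty :=
    ⟨u, by simp [List.mem_toFinset, w.start_mem_support]⟩
  refine ⟨w.support.toFinset.min' hne, ?_, fun x hx => ?_⟩
  · simpa [List.mem_toFinset] using w.support.toFinset.min'_mem hne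
  · exact w.support.toFinset.min'_le x (by simpa [List.mem_toFinset] using hx)

end Aux

/-- With `B = ⋃_{a ∈ A} WReach_r[G,<,a]`: for every vertex `u` at distance at most `r` from
`A`, the set `B ∩ WReach_r[G,<,u]` is nonempty, and for its `<`-maximum element `b`, the
set `WReach_{2r}[G,<,b]` meets every `(u,A)`-path of length at most `r`. -/
theorem wreach_guarding {V : Type} [Fintype V] [LinearOrder V] (G : SimpleGraph V)
    (A : Set V) (r : ℕ) (u : V) (hu : ∃ a ∈ A, G.edist u a ≤ r) :
    ((⋃ a ∈ A, G.wreach r a) ∩ G.wreach r u).Nonempty ∧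
    ∀ b : V, IsGreatest ((⋃ a ∈ A, G.wreach r a) ∩ G.wreach r u) b →
      ∀ a ∈ A, ∀ w : G.Walk u a, w.IsPath → w.length ≤ r →
        ∃ x ∈ G.wreach (2 * r) b, x ∈ w.support := by
  classical
  -- key construction: from a path u→a of length ≤ r, its min vertex m lies in both sets
  have key : ∀ a ∈ A, ∀ w : G.Walk u a, w.IsPath → w.length ≤ r →
      ∀ m ∈ w.support, (∀ x ∈ w.support, m ≤ x) →
      m ∈ (⋃ a ∈ A, G.wreach r a) ∩ G.wreach r u := by
    intro a ha w hw hlen m hm hmin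
    constructor
    · refine Set.mem_biUnion ha ?_
      refine mem_wreach_of_walk w.reverse (hw.reverse) (by simpa using hlen) ?_ ?_
      · simpa using hm
      · intro x hx; exact hmin x (by simpa using hx)
    · exact mem_wreach_of_walk w hw hlen hm hmin
  constructor
  · obtain ⟨a, ha, hd⟩ := hu
    have hne : G.edist u a ≠ ⊤ := fun h => by simp [h] at hd
    obtain ⟨p, hp⟩ := G.exists_walk_of_edist_ne_top hne
    -- take a path with length ≤ r
    have hplen : (p.bypass.length : ℕ∞) ≤ r := by
      calc (p.bypass.length : ℕ∞) ≤ (p.length : ℕ∞) := by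
            exact_mod_cast p.length_bypass_le
        _ = G.edist u a := hp
        _ ≤ r := hd
    have hplen' : p.bypass.length ≤ r := by exact_mod_cast hplen
    obtain ⟨m, hm, hmin⟩ := exists_min_support p.bypass
    exact ⟨m, key a ha p.bypass p.bypass_isPath hplen' m hm hmin⟩
  · rintro b ⟨hbmem, hbub⟩ a ha w hw hlen
    obtain ⟨m, hm, hmin⟩ := exists_min_support w
    have hmset := key a ha w hw hlen m hm hmin
    have hmb : m ≤ b := hbub hmset
    obtain ⟨p, hp, hplen, hpmin⟩ := hbmem.2
    -- walk from b to m: reverse of p, then prefix of w up to m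
    set q : G.Walk b m := p.reverse.append (w.takeUntil m hm) with hq
    have hqlen : q.length ≤ 2 * r := by
      have h1 : p.reverse.length ≤ r := by simpa using hplen
      have h2 : (w.takeUntil m hm).length ≤ r :=
        le_trans (w.length_takeUntil_le hm) hlen
      calc q.length = p.reverse.length + (w.takeUntil m hm).length :=
            SimpleGraph.Walk.length_append _ _
        _ ≤ r + r := Nat.add_le_add h1 h2
        _ = 2 * r := by ring
    have hqmin : ∀ x ∈ q.support, m ≤ x := by
      intro x hx
      rw [hq, SimpleGraph.Walk.mem_support_append_iff] at hx
      rcases hx with hx | hx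
      · have : b ≤ x := hpmin x (by simpa using hx)
        exact le_trans hmb this
      · exact hmin x (w.support_takeUntil_subset hm hx)
    refine ⟨m, ?_, hm⟩
    exact ⟨q.bypass, q.bypass_isPath, le_trans q.length_bypass_le hqlen,
      fun x hx => hqmin x (q.support_bypass_subset hx)⟩
end
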